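/- Strong duality for the affine surrogate: let ℓ̃(s) = ℓ₀ + cᵀs be affine, m ≥ 1, ρ ∈ (0,1]. Then max over s ∈ S_ρ of ℓ̃(s) equals inf over λ ≥ 0 of [ℓ₀ + λρ + ∑ₑ max(cₑ − λ/m, 0)], where S_ρ = {s ∈ [0,1]^m : (1/m)∑ₑ sₑ ≤ ρ}. -/

import Mathlib

/-!
Substitute `μ = λ / m` and `k = ρ m`. Weak duality is the pointwise bound
`c s ≤ max (c - μ) 0 + μ s` for `s ∈ [0, 1]`, summed and combined with `∑ s ≤ k`.
For equality, choose a threshold `μ ≥ 0` with `#{μ < c} ≤ k` and either `μ = 0` or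
`k < #{μ ≤ c}`, and the fractional-knapsack point that is `1` where `c > μ`, `0` where
`c < μ`, and fractional on the ties, with `∑ s = min k #{μ ≤ c}`. Complementary slackness
then makes every pointwise bound an equality and `μ ∑ s = μ k`.
-/

section FractionalKnapsack

open Finset

variable {ι : Type*} [Fintype ι] (c : ι → ℝ)

theorem mul_le_max_sub_zero_add_mul {a s : ℝ} (hs : s ∈ Set.Icc (0 : ℝ) 1) (μ : ℝ) :
    a * s ≤ max (a - μ) 0 + μ * s := by
  obtain ⟨hs0, hs1⟩ := hs
  rcases le_total a μ with h | h
  · nlinarith [le_max_right (a - μ) 0]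
  · rw [max_eq_left (sub_nonneg.2 h)]
    nlinarith

theorem sum_mul_le_dual {s : ι → ℝ} {k μ : ℝ} (hs : ∀ e, s e ∈ Set.Icc (0 : ℝ) 1)
    (hsum : ∑ e, s e ≤ k) (hμ : 0 ≤ μ) :
    ∑ e, c e * s e ≤ μ * k + ∑ e, max (c e - μ) 0 :=
  calc ∑ e, c e * s e ≤ ∑ e, (max (c e - μ) 0 + μ * s e) :=
        sum_le_sum fun e _ => mul_le_max_sub_zero_add_mul (hs e) μ
    _ = μ * ∑ e, s e + ∑ e, max (c e - μ) 0 := by rw [sum_add_distrib, mul_sum, add_comm]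
    _ ≤ μ * k + ∑ e, max (c e - μ) 0 := by gcongr

theorem sum_mul_eq_dual_of_complementary_slackness {s : ι → ℝ} {k μ : ℝ}
    (hs1 : ∀ e, μ < c e → s e = 1) (hs0 : ∀ e, c e < μ → s e = 0)
    (hslack : μ * ∑ e, s e = μ * k) :
    ∑ e, c e * s e = μ * k + ∑ e, max (c e - μ) 0 := by
  have hterm : ∀ e, c e * s e = max (c e - μ) 0 + μ * s e := by
    intro e
    rcases lt_trichotomy (c e) μ with h | h | h
    · rw [hs0 e h, max_eq_right (by linarith)]; ring
    · rw [h, sub_self, max_self]; ring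
    · rw [hs1 e h, max_eq_left (by linarith)]; ring
  rw [sum_congr rfl fun e _ => hterm e, sum_add_distrib, ← mul_sum, hslack, add_comm]

theorem exists_lt_apply_and_lt_card_le {k a : ℝ} (hk : 0 ≤ k)
    (h : k < #{e | a < c e}) : ∃ e, a < c e ∧ k < #{e' | c e ≤ c e'} := by
  have hne : ({e | a < c e} : Finset ι).Nonempty :=
    card_pos.1 (by exact_mod_cast hk.trans_lt h)
  obtain ⟨e, he, hmin⟩ := exists_min_image _ c hne
  have hae : a < c e := (mem_filter.1 he).2
  have hsets : #{e' | c e ≤ c e'} = #{e' | a < c e'} := by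
    congr 1
    ext e'
    simp only [mem_filter, mem_univ, true_and]
    exact ⟨hae.trans_le, fun h' => hmin e' (by simpa using h')⟩
  exact ⟨e, hae, hsets ▸ h⟩

/-- Take the largest `μ ∈ {0} ∪ range c` with `μ = 0` or `k < #{μ ≤ c}`; if more than `k`
coordinates exceeded it, the smallest of their values would be a larger such level. -/
theorem exists_optimal_multiplier {k : ℝ} (hk : 0 ≤ k) :
    ∃ μ, 0 ≤ μ ∧ #{e | μ < c e} ≤ k ∧ (μ = 0 ∨ k < #{e | μ ≤ c e}) := by
  set V : Finset ℝ := {b ∈ insert 0 (univ.image c) | b = 0 ∨ k < #{e | b ≤ c e}}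
  have h0V : (0 : ℝ) ∈ V := by simp [V]
  obtain ⟨μ, hμV, hmax⟩ := V.exists_max_image id ⟨0, h0V⟩
  refine ⟨μ, hmax 0 h0V, ?_, (mem_filter.1 hμV).2⟩
  by_contra! h
  obtain ⟨e, hlt, hcard⟩ := exists_lt_apply_and_lt_card_le c hk h
  have hV : c e ∈ V := by simp [V, hcard]
  exact (hmax _ hV).not_gt hlt

theorem exists_primal_of_card_lt_le {k μ : ℝ} (hk : #{e | μ < c e} ≤ k) :
    ∃ s : ι → ℝ, (∀ e, s e ∈ Set.Icc (0 : ℝ) 1) ∧ (∀ e, μ < c e → s e = 1) ∧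
      (∀ e, c e < μ → s e = 0) ∧ ∑ e, s e = min k #{e | μ ≤ c e} := by
  have hle : (#{e | μ < c e} : ℝ) ≤ #{e | μ ≤ c e} := by
    exact_mod_cast card_le_card fun e => by simpa using le_of_lt
  obtain ⟨u, v, hu, hv, huv, hmix⟩ : min k #{e | μ ≤ c e} ∈ segment ℝ
      (#{e | μ < c e} : ℝ) #{e | μ ≤ c e} := by
    rw [segment_eq_Icc hle]
    exact ⟨le_min hk hle, min_le_right _ _⟩
  refine ⟨fun e => u * (if μ < c e then 1 else 0) + v * (if μ ≤ c e then 1 else 0),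
    fun e => ?_, fun e he => ?_, fun e he => ?_, ?_⟩
  · dsimp only
    constructor <;> split_ifs <;> nlinarith
  · simp [he, he.le, huv]
  · simp [he.not_gt, he.not_ge]
  · rw [← hmix, sum_add_distrib, ← mul_sum, ← mul_sum, sum_boole, sum_boole, smul_eq_mul,
      smul_eq_mul]

theorem exists_primal_dual_optimal {k : ℝ} (hk : 0 ≤ k) :
    ∃ μ, 0 ≤ μ ∧ ∃ s : ι → ℝ, (∀ e, s e ∈ Set.Icc (0 : ℝ) 1) ∧ ∑ e, s e ≤ k ∧
      ∑ e, c e * s e = μ * k + ∑ e, max (c e - μ) 0 := by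
  obtain ⟨μ, hμ, hlt, hμk⟩ := exists_optimal_multiplier c hk
  obtain ⟨s, hs, hs1, hs0, hsum⟩ := exists_primal_of_card_lt_le c hlt
  refine ⟨μ, hμ, s, hs, hsum ▸ min_le_left _ _,
    sum_mul_eq_dual_of_complementary_slackness c hs1 hs0 ?_⟩
  rcases hμk with rfl | hk'
  · simp
  · rw [hsum, min_eq_left hk'.le]

end FractionalKnapsack

theorem csSup_eq_csInf_of_mem_of_forall_le {α : Type*} [ConditionallyCompleteLattice α]
    {P D : Set α} {x : α} (hxP : x ∈ P) (hxD : x ∈ D) (h : ∀ p ∈ P, ∀ d ∈ D, p ≤ d) :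
    sSup P = sInf D := by
  rw [IsGreatest.csSup_eq ⟨hxP, fun p hp => h p hp x hxD⟩,
    IsLeast.csInf_eq ⟨hxD, fun d hd => h x hxP d hd⟩]

/-- Strong duality for the affine surrogate. -/
theorem strong_duality_affine_surrogate (m : ℕ) (hm : 0 < m) (ℓ₀ : ℝ) (c : Fin m → ℝ)
    (ρ : ℝ) (hρ : ρ ∈ Set.Ioc (0:ℝ) 1) :
    sSup ((fun s : Fin m → ℝ => ℓ₀ + ∑ e, c e * s e) ''
        {s : Fin m → ℝ | (∀ e, s e ∈ Set.Icc (0:ℝ) 1) ∧ (1 / m) * ∑ e, s e ≤ ρ}) =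
      sInf ((fun lam : ℝ => ℓ₀ + lam * ρ + ∑ e, max (c e - lam / m) 0) ''
        {lam : ℝ | 0 ≤ lam}) := by
  have hm' : (0 : ℝ) < m := by exact_mod_cast hm
  have hbudget : ∀ s : Fin m → ℝ, (1 / m) * ∑ e, s e ≤ ρ ↔ ∑ e, s e ≤ ρ * m := fun s => by
    rw [one_div, inv_mul_le_iff₀ hm', mul_comm]
  have hscale : ∀ lam : ℝ, lam / m * (ρ * m) = lam * ρ := fun lam => by
    field_simp
  obtain ⟨μ, hμ, s, hs, hsum, hval⟩ := exists_primal_dual_optimal c (k := ρ * m)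
    (mul_nonneg hρ.1.le hm'.le)
  refine csSup_eq_csInf_of_mem_of_forall_le ⟨s, ⟨hs, (hbudget s).2 hsum⟩, rfl⟩
    ⟨m * μ, mul_nonneg hm'.le hμ, ?_⟩ ?_
  · dsimp only
    rw [mul_div_cancel_left₀ μ hm'.ne', hval]
    ring
  · rintro _ ⟨s', ⟨hs', hsum'⟩, rfl⟩ _ ⟨lam, hlam, rfl⟩
    have hweak := sum_mul_le_dual c hs' ((hbudget s').1 hsum') (div_nonneg hlam hm'.le)
    rw [hscale] at hweak
    dsimp only
    linarith
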